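/- Let I = {1,…,κ} with κ ≥ 2, and for each i ∈ I let A_i ∈ ℝ^{2×2} be invertible with ‖A_i‖ < 1. Suppose there exist θ ∈ S¹ and 0 < β < π/2 such that A_i(cl X(θ,β)) ⊂ X(θ,β) and A_iᵀ(cl X(θ,β)) ⊂ X(θ,β) for every i ∈ I. Then for every finite word 𝚒 and every x ∈ X(θ,β), the unoriented angle between the line spanned by A_𝚒(θ₁(A_𝚒)) and the line spanned by A_𝚒 x is at most (π/(2·cos β))·α₂(A_𝚒)/α₁(A_𝚒). -/

import Mathlib

open MeasureTheory Filter Matrix Real Set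

noncomputable section

abbrev E2 := EuclideanSpace ℝ (Fin 2)

noncomputable def mLin (A : Matrix (Fin 2) (Fin 2) ℝ) : E2 →L[ℝ] E2 :=
  LinearMap.toContinuousLinearMap (Matrix.toEuclideanLin A)

/-- largest singular value = operator norm -/
noncomputable def a1 (A : Matrix (Fin 2) (Fin 2) ℝ) : ℝ := ‖mLin A‖

/-- smallest singular value -/
noncomputable def a2 (A : Matrix (Fin 2) (Fin 2) ℝ) : ℝ := |A.det| / a1 A

/-- product of the matrices along a finite word -/
noncomputable def wprod {κ : ℕ} (A : Fin κ → Matrix (Fin 2) (Fin 2) ℝ) (l : List (Fin κ)) :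
    Matrix (Fin 2) (Fin 2) ℝ := (l.map A).prod

/-- the cone X(θ,β) -/
def cone (θ : E2) (β : ℝ) : Set E2 :=
  {x | x ≠ 0 ∧ Real.cos (β / 2) * ‖x‖ < |(inner ℝ θ x : ℝ)|}

/-- unoriented angle between the lines spanned by two vectors -/
noncomputable def uangle (u v : E2) : ℝ :=
  Real.arccos (|(inner ℝ u v : ℝ)| / (‖u‖ * ‖v‖))

/-!
Write `B = A_𝚒` and `w = perp v`, so that `(v, w)` is an orthonormal eigenbasis of `BᵀB` with
eigenvalues `α₁²` and `α₂²` (the latter through `|det B| = ‖B v‖ ‖B w‖`), and `B v ⊥ B w`.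
Both `B` and `Bᵀ` map the punctured closed cone into the open cone, hence so does `BᵀB`.
A boundary ray of the cone shows that the axis `θ` is not an eigenvector of `BᵀB` for `α₂²`;
so `α₂ < α₁` and `⟪v, θ⟫ ≠ 0`, and power iteration from `θ` puts `v` in the closed cone:
`|⟪v, θ⟫| ≥ cos (β/2)`. The triangle inequality for angles gives `|⟪v, x⟫| ≥ cos β ‖x‖`, and
writing `B x = ⟪v, x⟫ B v + ⟪w, x⟫ B w` bounds the angle by
`arctan (|⟪w, x⟫| α₂ / (|⟪v, x⟫| α₁)) ≤ α₂ / (α₁ cos β)`.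
-/

open InnerProductGeometry
open scoped RealInnerProductSpace Topology

def perp (x : E2) : E2 := !₂[-x 1, x 0]

lemma inner_fin_two (x y : E2) : ⟪x, y⟫ = x 0 * y 0 + x 1 * y 1 := by
  simp [PiLp.inner_apply, Fin.sum_univ_two, mul_comm]

lemma norm_sq_fin_two (x : E2) : ‖x‖ ^ 2 = x 0 ^ 2 + x 1 ^ 2 := by
  rw [← real_inner_self_eq_norm_sq, inner_fin_two]; ring

lemma perp_apply_zero (x : E2) : perp x 0 = -x 1 := rfl

lemma perp_apply_one (x : E2) : perp x 1 = x 0 := rfl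

lemma inner_self_perp (x : E2) : ⟪x, perp x⟫ = 0 := by
  rw [inner_fin_two, perp_apply_zero, perp_apply_one]; ring

lemma norm_perp (x : E2) : ‖perp x‖ = ‖x‖ := by
  rw [← sq_eq_sq₀ (norm_nonneg _) (norm_nonneg _), norm_sq_fin_two, norm_sq_fin_two,
    perp_apply_zero, perp_apply_one]
  ring

lemma eq_inner_smul_add_inner_perp_smul {v : E2} (hv : ‖v‖ = 1) (z : E2) :
    z = ⟪v, z⟫ • v + ⟪perp v, z⟫ • perp v := by
  have hv2 : v 0 ^ 2 + v 1 ^ 2 = 1 := by rw [← norm_sq_fin_two, hv, one_pow]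
  refine PiLp.ext (Fin.forall_fin_two.2 ⟨?_, ?_⟩) <;>
  · simp only [PiLp.add_apply, PiLp.smul_apply, smul_eq_mul, inner_fin_two, perp_apply_zero,
      perp_apply_one]
    linear_combination (-(z _)) * hv2

lemma norm_smul_add_smul_perp_sq {v : E2} (hv : ‖v‖ = 1) (a b : ℝ) :
    ‖a • v + b • perp v‖ ^ 2 = a ^ 2 + b ^ 2 := by
  rw [norm_add_sq_real, real_inner_smul_left, real_inner_smul_right, inner_self_perp,
    norm_smul, norm_smul, norm_perp, hv, Real.norm_eq_abs, Real.norm_eq_abs]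
  simp

lemma toEuclideanLin_apply_fin_two (M : Matrix (Fin 2) (Fin 2) ℝ) (x : E2) (i : Fin 2) :
    toEuclideanLin M x i = M i 0 * x 0 + M i 1 * x 1 := by
  fin_cases i <;> simp [toLpLin_apply]

lemma inner_toEuclideanLin_transpose (M : Matrix (Fin 2) (Fin 2) ℝ) (x y : E2) :
    ⟪toEuclideanLin Mᵀ x, y⟫ = ⟪x, toEuclideanLin M y⟫ := by
  rw [← conjTranspose_eq_transpose_of_trivial, toEuclideanLin_conjTranspose_eq_adjoint,
    LinearMap.adjoint_inner_left]

lemma norm_toEuclideanLin_le (M : Matrix (Fin 2) (Fin 2) ℝ) (x : E2) :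
    ‖toEuclideanLin M x‖ ≤ a1 M * ‖x‖ :=
  (mLin M).le_opNorm x

/-- Lagrange's identity, together with the fact that `M` scales the cross product by `det M`. -/
lemma abs_det_mul_norm_sq {M : Matrix (Fin 2) (Fin 2) ℝ} {v : E2}
    (h : ⟪toEuclideanLin M v, toEuclideanLin M (perp v)⟫ = 0) :
    |M.det| * ‖v‖ ^ 2 = ‖toEuclideanLin M v‖ * ‖toEuclideanLin M (perp v)‖ := by
  rw [← sq_eq_sq₀ (by positivity) (by positivity), mul_pow, mul_pow, sq_abs]
  have lagrange (p q : E2) : ‖p‖ ^ 2 * ‖q‖ ^ 2 = ⟪p, q⟫ ^ 2 + (p 0 * q 1 - p 1 * q 0) ^ 2 := by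
    rw [norm_sq_fin_two, norm_sq_fin_two, inner_fin_two]; ring
  rw [lagrange, h, norm_sq_fin_two, toEuclideanLin_apply_fin_two, toEuclideanLin_apply_fin_two,
    toEuclideanLin_apply_fin_two, toEuclideanLin_apply_fin_two, perp_apply_zero, perp_apply_one,
    det_fin_two]
  ring

lemma a1_nonneg (B : Matrix (Fin 2) (Fin 2) ℝ) : 0 ≤ a1 B :=
  norm_nonneg _

lemma a2_nonneg (B : Matrix (Fin 2) (Fin 2) ℝ) : 0 ≤ a2 B :=
  div_nonneg (abs_nonneg _) (norm_nonneg _)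

lemma inner_gram_apply (B : Matrix (Fin 2) (Fin 2) ℝ) (x y : E2) :
    ⟪toEuclideanLin (Bᵀ * B) x, y⟫ = ⟪toEuclideanLin B x, toEuclideanLin B y⟫ := by
  rw [toLpLin_mul_same, LinearMap.comp_apply, inner_toEuclideanLin_transpose]

section SingularFrame

variable {B : Matrix (Fin 2) (Fin 2) ℝ} {v : E2}

lemma norm_toEuclideanLin_eq_a1 (hv : ‖v‖ = 1)
    (hev : toEuclideanLin (Bᵀ * B) v = a1 B ^ 2 • v) : ‖toEuclideanLin B v‖ = a1 B := by
  rw [← sq_eq_sq₀ (norm_nonneg _) (a1_nonneg B), ← real_inner_self_eq_norm_sq,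
    ← inner_gram_apply, hev, real_inner_smul_left, real_inner_self_eq_norm_sq, hv, one_pow,
    mul_one]

lemma inner_toEuclideanLin_perp_eq_zero (hev : toEuclideanLin (Bᵀ * B) v = a1 B ^ 2 • v) :
    ⟪toEuclideanLin B v, toEuclideanLin B (perp v)⟫ = 0 := by
  rw [← inner_gram_apply, hev, real_inner_smul_left, inner_self_perp, mul_zero]

lemma norm_toEuclideanLin_perp_le_a1 (hv : ‖v‖ = 1) : ‖toEuclideanLin B (perp v)‖ ≤ a1 B := by
  simpa [norm_perp, hv] using norm_toEuclideanLin_le B (perp v)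

lemma norm_toEuclideanLin_perp_eq_a2 (hv : ‖v‖ = 1)
    (hev : toEuclideanLin (Bᵀ * B) v = a1 B ^ 2 • v) : ‖toEuclideanLin B (perp v)‖ = a2 B := by
  have hdet := abs_det_mul_norm_sq (inner_toEuclideanLin_perp_eq_zero hev)
  rw [hv, one_pow, mul_one, norm_toEuclideanLin_eq_a1 hv hev] at hdet
  rcases (a1_nonneg B).eq_or_lt' with ha1 | ha1
  · rw [a2, hdet, ha1, zero_mul, zero_div]
    exact le_antisymm (ha1 ▸ norm_toEuclideanLin_perp_le_a1 hv) (norm_nonneg _)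
  · rw [a2, hdet, mul_div_cancel_left₀ _ ha1.ne']

lemma toEuclideanLin_gram_perp (hv : ‖v‖ = 1) (hev : toEuclideanLin (Bᵀ * B) v = a1 B ^ 2 • v) :
    toEuclideanLin (Bᵀ * B) (perp v) = a2 B ^ 2 • perp v := by
  rw [eq_inner_smul_add_inner_perp_smul hv (toEuclideanLin (Bᵀ * B) (perp v)),
    real_inner_comm, inner_gram_apply, real_inner_comm, inner_toEuclideanLin_perp_eq_zero hev,
    real_inner_comm, inner_gram_apply, real_inner_self_eq_norm_sq,
    norm_toEuclideanLin_perp_eq_a2 hv hev, zero_smul, zero_add]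

lemma toEuclideanLin_gram_apply (hv : ‖v‖ = 1) (hev : toEuclideanLin (Bᵀ * B) v = a1 B ^ 2 • v)
    (x : E2) : toEuclideanLin (Bᵀ * B) x =
      (a1 B ^ 2 * ⟪v, x⟫) • v + (a2 B ^ 2 * ⟪perp v, x⟫) • perp v := by
  conv_lhs => rw [eq_inner_smul_add_inner_perp_smul hv x]
  rw [map_add, map_smul, map_smul, hev, toEuclideanLin_gram_perp hv hev, smul_smul, smul_smul,
    mul_comm ⟪v, x⟫, mul_comm ⟪perp v, x⟫]

lemma a2_le_a1 (hv : ‖v‖ = 1) (hev : toEuclideanLin (Bᵀ * B) v = a1 B ^ 2 • v) : a2 B ≤ a1 B :=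
  norm_toEuclideanLin_perp_eq_a2 hv hev ▸ norm_toEuclideanLin_perp_le_a1 hv

lemma sq_a2_mul_norm_le (hv : ‖v‖ = 1) (hev : toEuclideanLin (Bᵀ * B) v = a1 B ^ 2 • v)
    (x : E2) : a2 B ^ 2 * ‖x‖ ≤ ‖toEuclideanLin (Bᵀ * B) x‖ := by
  have ha2 := a2_nonneg B
  have ha21 := a2_le_a1 hv hev
  have hx := norm_smul_add_smul_perp_sq hv ⟪v, x⟫ ⟪perp v, x⟫
  rw [← eq_inner_smul_add_inner_perp_smul hv] at hx
  have hsq : (a2 B ^ 2) ^ 2 ≤ (a1 B ^ 2) ^ 2 := by gcongr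
  rw [← sq_le_sq₀ (by positivity) (norm_nonneg _), toEuclideanLin_gram_apply hv hev,
    norm_smul_add_smul_perp_sq hv, mul_pow, hx]
  nlinarith [sq_nonneg ⟪v, x⟫]

end SingularFrame

section Angles

variable {V : Type*} [NormedAddCommGroup V] [InnerProductSpace ℝ V]

lemma angle_le_of_cos_mul_norm_le_inner {θ u : V} (hθ : ‖θ‖ = 1) (hu : u ≠ 0) {γ : ℝ}
    (hγ₀ : 0 ≤ γ) (hγ : γ ≤ π) (h : cos γ * ‖u‖ ≤ ⟪θ, u⟫) : angle θ u ≤ γ := by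
  refine (strictAntiOn_cos.le_iff_ge ⟨hγ₀, hγ⟩ ⟨angle_nonneg θ u, angle_le_pi θ u⟩).1 ?_
  rwa [cos_angle, hθ, one_mul, le_div_iff₀ (norm_pos_iff.2 hu)]

lemma cos_add_mul_norm_mul_norm_le_inner {θ u x : V} (hθ : ‖θ‖ = 1) {γ δ : ℝ} (hγ : 0 ≤ γ)
    (hδ : 0 ≤ δ) (hγδ : γ + δ ≤ π) (hu : cos γ * ‖u‖ ≤ ⟪θ, u⟫) (hx : cos δ * ‖x‖ ≤ ⟪θ, x⟫) :
    cos (γ + δ) * (‖u‖ * ‖x‖) ≤ ⟪u, x⟫ := by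
  rcases eq_or_ne u 0 with rfl | hu0
  · simp
  rcases eq_or_ne x 0 with rfl | hx0
  · simp
  have hangle : angle u x ≤ γ + δ := by
    refine (angle_le_angle_add_angle u θ x).trans (add_le_add ?_ ?_)
    · rw [angle_comm]
      exact angle_le_of_cos_mul_norm_le_inner hθ hu0 hγ (by linarith) hu
    · exact angle_le_of_cos_mul_norm_le_inner hθ hx0 hδ (by linarith) hx
  rw [← cos_angle_mul_norm_mul_norm u x]
  gcongr
  exact cos_le_cos_of_nonneg_of_le_pi (angle_nonneg u x) hγδ hangle

lemma cos_add_mul_norm_mul_norm_le_abs_inner {θ u x : V} (hθ : ‖θ‖ = 1) {γ δ : ℝ} (hγ : 0 ≤ γ)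
    (hδ : 0 ≤ δ) (hγδ : γ + δ ≤ π) (hu : cos γ * ‖u‖ ≤ |⟪θ, u⟫|)
    (hx : cos δ * ‖x‖ ≤ |⟪θ, x⟫|) : cos (γ + δ) * (‖u‖ * ‖x‖) ≤ |⟪u, x⟫| := by
  have sign (y : V) : ∃ s : ℝ, |s| = 1 ∧ ⟪θ, s • y⟫ = |⟪θ, y⟫| := by
    rcases abs_cases ⟪θ, y⟫ with ⟨h, -⟩ | ⟨h, -⟩
    · exact ⟨1, abs_one, by rw [one_smul, h]⟩
    · exact ⟨-1, by simp, by rw [neg_one_smul, inner_neg_right, h]⟩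
  obtain ⟨s, hs, hsu⟩ := sign u
  obtain ⟨t, ht, htx⟩ := sign x
  have key := cos_add_mul_norm_mul_norm_le_inner hθ hγ hδ hγδ (u := s • u) (x := t • x)
    (by rwa [norm_smul, Real.norm_eq_abs, hs, one_mul, hsu])
    (by rwa [norm_smul, Real.norm_eq_abs, ht, one_mul, htx])
  rw [norm_smul, norm_smul, Real.norm_eq_abs, Real.norm_eq_abs, hs, ht, one_mul, one_mul,
    real_inner_smul_left, real_inner_smul_right] at key
  calc cos (γ + δ) * (‖u‖ * ‖x‖) ≤ s * (t * ⟪u, x⟫) := key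
    _ ≤ |s * (t * ⟪u, x⟫)| := le_abs_self _
    _ = |⟪u, x⟫| := by rw [abs_mul, abs_mul, hs, ht, one_mul, one_mul]

end Angles

lemma arctan_le_self {y : ℝ} (hy : 0 ≤ y) : arctan y ≤ y := by
  simpa [tan_arctan] using le_tan (arctan_nonneg.2 hy) (arctan_lt_pi_div_two y)

lemma uangle_smul_right (u z : E2) {r : ℝ} (hr : r ≠ 0) : uangle u (r • z) = uangle u z := by
  rw [uangle, uangle, real_inner_smul_right, norm_smul, abs_mul, Real.norm_eq_abs, mul_left_comm,
    mul_div_mul_left _ _ (abs_pos.2 hr).ne']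

lemma uangle_eq_angle {u z : E2} (h : 0 ≤ ⟪u, z⟫) : uangle u z = angle u z := by
  rw [uangle, abs_of_nonneg h, angle]

lemma uangle_add_le {p y : E2} (h : ⟪p, y⟫ = 0) (hp : p ≠ 0) : uangle p (p + y) ≤ ‖y‖ / ‖p‖ := by
  rw [uangle_eq_angle (by rw [inner_add_right, h, add_zero]; exact real_inner_self_nonneg),
    angle_add_eq_arctan_of_inner_eq_zero h hp]
  exact arctan_le_self (by positivity)

lemma uangle_smul_add_smul_le {p q : E2} (hpq : ⟪p, q⟫ = 0) (hp : p ≠ 0) {a : ℝ} (ha : a ≠ 0)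
    (b : ℝ) : uangle p (a • p + b • q) ≤ |b| * ‖q‖ / (|a| * ‖p‖) := by
  have hsplit : a • p + b • q = a • (p + (b / a) • q) := by
    rw [smul_add, smul_smul, mul_div_cancel₀ _ ha]
  rw [hsplit, uangle_smul_right _ _ ha]
  refine (uangle_add_le (by rw [real_inner_smul_right, hpq, mul_zero]) hp).trans_eq ?_
  rw [norm_smul, Real.norm_eq_abs, abs_div]
  field_simp

section Cone

variable {θ : E2} {β : ℝ}

lemma mem_cone_of_lt {x : E2} (h : cos (β / 2) * ‖x‖ < |⟪θ, x⟫|) : x ∈ cone θ β :=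
  ⟨by rintro rfl; simp at h, h⟩

lemma self_mem_cone (hθ : ‖θ‖ = 1) (hβ : cos (β / 2) < 1) : θ ∈ cone θ β :=
  mem_cone_of_lt (by rwa [real_inner_self_eq_norm_sq, hθ, one_pow, abs_one, mul_one])

lemma smul_mem_cone {x : E2} (hx : x ∈ cone θ β) {r : ℝ} (hr : r ≠ 0) : r • x ∈ cone θ β := by
  refine mem_cone_of_lt ?_
  rw [norm_smul, real_inner_smul_right, abs_mul, Real.norm_eq_abs, mul_left_comm]
  exact mul_lt_mul_of_pos_left hx.2 (abs_pos.2 hr)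

lemma closure_cone_subset (θ : E2) (β : ℝ) :
    closure (cone θ β) ⊆ {x | cos (β / 2) * ‖x‖ ≤ |⟪θ, x⟫|} :=
  (closure_mono fun _ hx => hx.2).trans (closure_lt_subset_le (by fun_prop) (by fun_prop))

/-- Pushing `x` along the axis `θ` moves it into the open cone. -/
lemma mem_closure_cone_of_le (hθ : ‖θ‖ = 1) (hβ₀ : 0 ≤ cos (β / 2)) (hβ₁ : cos (β / 2) < 1)
    {x : E2} (hx : cos (β / 2) * ‖x‖ ≤ ⟪θ, x⟫) : x ∈ closure (cone θ β) := by
  have hlim : Tendsto (fun ε : ℝ => x + ε • θ) (𝓝[>] 0) (𝓝 x) :=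
    ((continuous_const.add (continuous_id.smul continuous_const)).tendsto' 0 x
      (by simp)).mono_left nhdsWithin_le_nhds
  refine mem_closure_of_tendsto hlim (eventually_nhdsWithin_of_forall fun ε (hε : 0 < ε) => ?_)
  have hinner : ⟪θ, x + ε • θ⟫ = ⟪θ, x⟫ + ε := by
    rw [inner_add_right, real_inner_smul_right, real_inner_self_eq_norm_sq, hθ]; ring
  have hnorm : ‖x + ε • θ‖ ≤ ‖x‖ + ε := by
    simpa [norm_smul, hθ, abs_of_pos hε] using norm_add_le x (ε • θ)
  refine mem_cone_of_lt ?_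
  calc cos (β / 2) * ‖x + ε • θ‖ ≤ cos (β / 2) * ‖x‖ + cos (β / 2) * ε := by
        rw [← mul_add]; exact mul_le_mul_of_nonneg_left hnorm hβ₀
    _ < ⟪θ, x⟫ + ε := by nlinarith
    _ ≤ |⟪θ, x + ε • θ⟫| := hinner ▸ le_abs_self _

def ConeContracting (θ : E2) (β : ℝ) (M : Matrix (Fin 2) (Fin 2) ℝ) : Prop :=
  ∀ x ∈ closure (cone θ β), x ≠ 0 → toEuclideanLin M x ∈ cone θ β

lemma ConeContracting.mapsTo {M : Matrix (Fin 2) (Fin 2) ℝ} (hM : ConeContracting θ β M) :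
    MapsTo (toEuclideanLin M) (cone θ β) (cone θ β) :=
  fun x hx => hM x (subset_closure hx) hx.1

lemma ConeContracting.mul {M N : Matrix (Fin 2) (Fin 2) ℝ} (hM : ConeContracting θ β M)
    (hN : ConeContracting θ β N) : ConeContracting θ β (M * N) := by
  intro x hx hx0
  rw [toLpLin_mul_same, LinearMap.comp_apply]
  exact hM.mapsTo (hN x hx hx0)

lemma coneContracting_list_prod {l : List (Matrix (Fin 2) (Fin 2) ℝ)} (hl : l ≠ [])
    (h : ∀ M ∈ l, ConeContracting θ β M) : ConeContracting θ β l.prod :=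
  List.prod_induction_nonempty _ (fun _ _ => ConeContracting.mul) hl h

lemma coneContracting_gram_wprod {κ : ℕ} {A : Fin κ → Matrix (Fin 2) (Fin 2) ℝ}
    (hA : ∀ i, ConeContracting θ β (A i)) (hAt : ∀ i, ConeContracting θ β (A i)ᵀ)
    {l : List (Fin κ)} (hl : l ≠ []) : ConeContracting θ β ((wprod A l)ᵀ * wprod A l) := by
  refine ConeContracting.mul ?_
    (coneContracting_list_prod (by simpa) (by simpa using fun i _ => hA i))
  rw [wprod, transpose_list_prod]
  exact coneContracting_list_prod (by simpa) (by simpa using fun i _ => hAt i)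

/-- The witness is a unit vector on the boundary of the cone: its image lies in the open cone,
which forces it to be shorter than `μ`. -/
lemma ConeContracting.exists_norm_lt {M : Matrix (Fin 2) (Fin 2) ℝ} (hM : ConeContracting θ β M)
    (hMt : Mᵀ = M) (hθ : ‖θ‖ = 1) (hβ₀ : 0 < cos (β / 2)) (hβ₁ : cos (β / 2) < 1) {μ : ℝ}
    (hμ : 0 ≤ μ) (hθμ : toEuclideanLin M θ = μ • θ) : ∃ y, ‖toEuclideanLin M y‖ < μ * ‖y‖ := by
  set y := cos (β / 2) • θ + sin (β / 2) • perp θ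
  have hy : ‖y‖ = 1 := by
    rw [← sq_eq_sq₀ (norm_nonneg _) zero_le_one, norm_smul_add_smul_perp_sq hθ, cos_sq_add_sin_sq,
      one_pow]
  have hθy : ⟪θ, y⟫ = cos (β / 2) := by
    rw [inner_add_right, real_inner_smul_right, real_inner_smul_right, inner_self_perp,
      real_inner_self_eq_norm_sq, hθ]
    ring
  have hMy := hM y (mem_closure_cone_of_le hθ hβ₀.le hβ₁ (by rw [hy, hθy, mul_one]))
    (norm_ne_zero_iff.1 (by rw [hy]; exact one_ne_zero))
  have hinner : ⟪θ, toEuclideanLin M y⟫ = μ * cos (β / 2) := by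
    rw [← inner_toEuclideanLin_transpose, hMt, hθμ, real_inner_smul_left, hθy]
  refine ⟨y, ?_⟩
  have := hMy.2
  rw [hinner, abs_mul, abs_of_nonneg hμ, abs_of_pos hβ₀, mul_comm μ] at this
  rw [hy, mul_one]
  exact lt_of_mul_lt_mul_left this hβ₀.le

lemma smul_mem_closure_cone_of_eigen {T : E2 →ₗ[ℝ] E2} (hT : MapsTo T (cone θ β) (cone θ β))
    (hθ : θ ∈ cone θ β) {v w : E2} {μ ν : ℝ} (hv : T v = μ • v) (hw : T w = ν • w) (hν : 0 ≤ ν)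
    (hνμ : ν < μ) {a b : ℝ} (hab : θ = a • v + b • w) : a • v ∈ closure (cone θ β) := by
  have hμ : 0 < μ := hν.trans_lt hνμ
  have hiter (n : ℕ) : (T ^ n) θ = (μ ^ n * a) • v + (ν ^ n * b) • w := by
    induction n with
    | zero => simpa using hab
    | succ n ih =>
      rw [pow_succ', Module.End.mul_apply, ih, map_add, map_smul, map_smul, hv, hw, smul_smul,
        smul_smul]
      congr 2 <;> ring
  have hmem (n : ℕ) : (T ^ n) θ ∈ cone θ β := by
    induction n with
    | zero => simpa using hθ
    | succ n ih => rw [pow_succ', Module.End.mul_apply]; exact hT ih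
  have hscaled (n : ℕ) : (μ ^ n)⁻¹ • (T ^ n) θ = a • v + ((ν / μ) ^ n * b) • w := by
    rw [hiter, smul_add, smul_smul, smul_smul, ← mul_assoc, inv_mul_cancel₀ (by positivity),
      one_mul, div_pow, div_eq_inv_mul, mul_assoc]
  have hlim : Tendsto (fun n : ℕ => (μ ^ n)⁻¹ • (T ^ n) θ) atTop (𝓝 (a • v)) := by
    simp_rw [hscaled]
    have h := (tendsto_pow_atTop_nhds_zero_of_lt_one (div_nonneg hν hμ.le)
      ((div_lt_one hμ).2 hνμ)).mul_const b |>.smul_const w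
    simpa using tendsto_const_nhds.add h
  exact mem_closure_of_tendsto hlim
    (Eventually.of_forall fun n => smul_mem_cone (hmem n) (inv_ne_zero (by positivity)))

end Cone

section Gram

variable {θ : E2} {β : ℝ} {B : Matrix (Fin 2) (Fin 2) ℝ} {v : E2}

lemma toEuclideanLin_gram_ne_sq_a2_smul (hG : ConeContracting θ β (Bᵀ * B)) (hθ : ‖θ‖ = 1)
    (hβ₀ : 0 < cos (β / 2)) (hβ₁ : cos (β / 2) < 1) (hv : ‖v‖ = 1)
    (hev : toEuclideanLin (Bᵀ * B) v = a1 B ^ 2 • v) :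
    toEuclideanLin (Bᵀ * B) θ ≠ a2 B ^ 2 • θ := fun h => by
  obtain ⟨y, hy⟩ := hG.exists_norm_lt (by rw [transpose_mul, transpose_transpose]) hθ hβ₀ hβ₁
    (sq_nonneg _) h
  exact hy.not_ge (sq_a2_mul_norm_le hv hev y)

lemma a2_lt_a1_of_coneContracting (hG : ConeContracting θ β (Bᵀ * B)) (hθ : ‖θ‖ = 1)
    (hβ₀ : 0 < cos (β / 2)) (hβ₁ : cos (β / 2) < 1) (hv : ‖v‖ = 1)
    (hev : toEuclideanLin (Bᵀ * B) v = a1 B ^ 2 • v) : a2 B < a1 B := by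
  refine (a2_le_a1 hv hev).lt_of_ne fun h =>
    toEuclideanLin_gram_ne_sq_a2_smul hG hθ hβ₀ hβ₁ hv hev ?_
  rw [toEuclideanLin_gram_apply hv hev, h, ← smul_smul, ← smul_smul, ← smul_add,
    ← eq_inner_smul_add_inner_perp_smul hv]

lemma inner_ne_zero_of_coneContracting (hG : ConeContracting θ β (Bᵀ * B)) (hθ : ‖θ‖ = 1)
    (hβ₀ : 0 < cos (β / 2)) (hβ₁ : cos (β / 2) < 1) (hv : ‖v‖ = 1)
    (hev : toEuclideanLin (Bᵀ * B) v = a1 B ^ 2 • v) : ⟪v, θ⟫ ≠ 0 := fun h => by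
  refine toEuclideanLin_gram_ne_sq_a2_smul hG hθ hβ₀ hβ₁ hv hev ?_
  have hθ' := eq_inner_smul_add_inner_perp_smul hv θ
  rw [h, zero_smul, zero_add] at hθ'
  rw [toEuclideanLin_gram_apply hv hev, h, mul_zero, zero_smul, zero_add, ← smul_smul, ← hθ']

lemma cos_half_le_abs_inner_of_coneContracting (hG : ConeContracting θ β (Bᵀ * B))
    (hθ : ‖θ‖ = 1) (hβ₀ : 0 < cos (β / 2)) (hβ₁ : cos (β / 2) < 1) (hv : ‖v‖ = 1)
    (hev : toEuclideanLin (Bᵀ * B) v = a1 B ^ 2 • v) : cos (β / 2) ≤ |⟪v, θ⟫| := by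
  have hmem := smul_mem_closure_cone_of_eigen hG.mapsTo (self_mem_cone hθ hβ₁) hev
    (toEuclideanLin_gram_perp hv hev) (sq_nonneg _)
    (pow_lt_pow_left₀ (a2_lt_a1_of_coneContracting hG hθ hβ₀ hβ₁ hv hev) (a2_nonneg B)
      two_ne_zero) (eq_inner_smul_add_inner_perp_smul hv θ)
  have h : cos (β / 2) * ‖⟪v, θ⟫ • v‖ ≤ |⟪θ, ⟪v, θ⟫ • v⟫| := closure_cone_subset θ β hmem
  rw [norm_smul, hv, mul_one, real_inner_smul_right, real_inner_comm v θ, abs_mul,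
    Real.norm_eq_abs] at h
  exact le_of_mul_le_mul_right h (abs_pos.2 (inner_ne_zero_of_coneContracting hG hθ hβ₀ hβ₁ hv hev))

lemma uangle_toEuclideanLin_le (hv : ‖v‖ = 1) (hev : toEuclideanLin (Bᵀ * B) v = a1 B ^ 2 • v)
    (ha1 : 0 < a1 B) {k : ℝ} (hk : 0 < k) {x : E2} (hx0 : x ≠ 0) (hx : k * ‖x‖ ≤ |⟪v, x⟫|) :
    uangle (toEuclideanLin B v) (toEuclideanLin B x) ≤ a2 B / (k * a1 B) := by
  have hxpos : 0 < ‖x‖ := norm_pos_iff.2 hx0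
  have hvx : ⟪v, x⟫ ≠ 0 := abs_pos.1 ((mul_pos hk hxpos).trans_le hx)
  have hBv : toEuclideanLin B v ≠ 0 :=
    norm_ne_zero_iff.1 (by rw [norm_toEuclideanLin_eq_a1 hv hev]; exact ha1.ne')
  have hperp : |⟪perp v, x⟫| ≤ ‖x‖ := by
    simpa [norm_perp, hv] using abs_real_inner_le_norm (perp v) x
  have ha2 := a2_nonneg B
  conv_lhs => rw [eq_inner_smul_add_inner_perp_smul hv x, map_add, map_smul, map_smul]
  calc _ ≤ |⟪perp v, x⟫| * ‖toEuclideanLin B (perp v)‖ / (|⟪v, x⟫| * ‖toEuclideanLin B v‖) :=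
        uangle_smul_add_smul_le (inner_toEuclideanLin_perp_eq_zero hev) hBv hvx _
    _ = |⟪perp v, x⟫| * a2 B / (|⟪v, x⟫| * a1 B) := by
        rw [norm_toEuclideanLin_perp_eq_a2 hv hev, norm_toEuclideanLin_eq_a1 hv hev]
    _ ≤ ‖x‖ * a2 B / (k * ‖x‖ * a1 B) := by gcongr
    _ = a2 B / (k * a1 B) := by field_simp

end Gram

theorem angle_within_cylinder_general (κ : ℕ)
    (A : Fin κ → Matrix (Fin 2) (Fin 2) ℝ)
    (θ : E2) (hθ : ‖θ‖ = 1) (β : ℝ) (hβ : 0 < β) (hβ' : β < π / 2)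
    (hK1a : ∀ i, ∀ x ∈ closure (cone θ β), x ≠ 0 → Matrix.toEuclideanLin (A i) x ∈ cone θ β)
    (hK1b : ∀ i, ∀ x ∈ closure (cone θ β), x ≠ 0 → Matrix.toEuclideanLin (A i)ᵀ x ∈ cone θ β) :
    ∀ li : List (Fin κ), li ≠ [] → ∀ x ∈ cone θ β, ∀ v : E2, ‖v‖ = 1 →
      Matrix.toEuclideanLin ((wprod A li)ᵀ * wprod A li) v = (a1 (wprod A li)) ^ 2 • v →
      uangle (Matrix.toEuclideanLin (wprod A li) v) (Matrix.toEuclideanLin (wprod A li) x) ≤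
        (π / (2 * Real.cos β)) * (a2 (wprod A li) / a1 (wprod A li)) := by
  intro li hli x hx v hv hev
  set B := wprod A li
  have hcβ : 0 < cos β := cos_pos_of_mem_Ioo ⟨by linarith, hβ'⟩
  have hc₀ : 0 < cos (β / 2) := cos_pos_of_mem_Ioo ⟨by linarith, by linarith⟩
  have hc₁ : cos (β / 2) < 1 := by
    rw [← cos_zero]; exact cos_lt_cos_of_nonneg_of_le_pi le_rfl (by linarith) (by linarith)
  have hG := coneContracting_gram_wprod hK1a hK1b hli
  have hvθ := cos_half_le_abs_inner_of_coneContracting hG hθ hc₀ hc₁ hv hev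
  have hvx : cos β * ‖x‖ ≤ |⟪v, x⟫| := by
    have h := cos_add_mul_norm_mul_norm_le_abs_inner hθ (half_pos hβ).le (half_pos hβ).le
      (by linarith) (by rwa [hv, mul_one, real_inner_comm]) hx.2.le
    rwa [add_halves, hv, one_mul] at h
  have ha1 := (a2_nonneg B).trans_lt (a2_lt_a1_of_coneContracting hG hθ hc₀ hc₁ hv hev)
  calc _ ≤ a2 B / (cos β * a1 B) := uangle_toEuclideanLin_le hv hev ha1 hcβ hx.1 hvx
    _ = 2 / (2 * cos β) * (a2 B / a1 B) := by field_simp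
    _ ≤ π / (2 * cos β) * (a2 B / a1 B) := by
        gcongr
        · exact div_nonneg (a2_nonneg B) ha1.le
        · linarith [pi_gt_three]

/-- Lemma 4.3(i): under (K1a) and (K1b), for every finite word `li` and every
`x ∈ X(θ,β)`, the unoriented angle between `A_li(θ₁(A_li))` and `A_li x` is at most
`(π / (2 cos β)) · α₂(A_li)/α₁(A_li)`. Here `v` ranges over the unit eigenvectors of
`(A_li)ᵀ A_li` with eigenvalue `α₁(A_li)²`. -/
theorem angle_within_cylinder (κ : ℕ) (hκ : 2 ≤ κ)
    (A : Fin κ → Matrix (Fin 2) (Fin 2) ℝ)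
    (hinv : ∀ i, IsUnit (A i).det) (hnorm : ∀ i, a1 (A i) < 1)
    (θ : E2) (hθ : ‖θ‖ = 1) (β : ℝ) (hβ : 0 < β) (hβ' : β < π / 2)
    (hK1a : ∀ i, ∀ x ∈ closure (cone θ β), x ≠ 0 → Matrix.toEuclideanLin (A i) x ∈ cone θ β)
    (hK1b : ∀ i, ∀ x ∈ closure (cone θ β), x ≠ 0 → Matrix.toEuclideanLin (A i)ᵀ x ∈ cone θ β) :
    ∀ li : List (Fin κ), li ≠ [] → ∀ x ∈ cone θ β, ∀ v : E2, ‖v‖ = 1 →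
      Matrix.toEuclideanLin ((wprod A li)ᵀ * wprod A li) v = (a1 (wprod A li)) ^ 2 • v →
      uangle (Matrix.toEuclideanLin (wprod A li) v) (Matrix.toEuclideanLin (wprod A li) x) ≤
        (π / (2 * Real.cos β)) * (a2 (wprod A li) / a1 (wprod A li)) :=
  angle_within_cylinder_general κ A θ hθ β hβ hβ' hK1a hK1b

end
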